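/- arXiv:1409.4990 — 2 statements merged into one kernel-verified Lean document; each statement's English description precedes it below -/
import Mathlib

section
/- Let H be an inner product space over ℂ, n ≥ 1, x₁,…,xₙ, y₁,…,yₙ ∈ H, p a probability vector, and a, b ∈ H, r, s ≥ 0. If ‖xᵢ − a‖ ≤ r and ‖yᵢ − b‖ ≤ s for all i, then |∑ᵢ pᵢ⟨xᵢ, yᵢ⟩ − ⟨∑ᵢ pᵢ xᵢ, ∑ᵢ pᵢ yᵢ⟩| ≤ r·s. -/
/-! Centring both families at their weighted means writes the left-hand side as the weighted
covariance `∑ pᵢ ⟪xᵢ - X, yᵢ - Y⟫`, which by Cauchy–Schwarz is at most the product of the square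
roots of the two weighted variances. Since the mean minimises the weighted mean squared distance,
the variance of the `xᵢ` is at most `∑ pᵢ ‖xᵢ - a‖² ≤ r²`, and likewise for the `yᵢ`. -/

open scoped InnerProductSpace

theorem sum_smul_sub_of_sum_eq_one {R M ι : Type*} [Ring R] [AddCommGroup M]
    [Module R M] [Fintype ι] {w : ι → R} (hw : ∑ i, w i = 1) (x : ι → M) (a : M) :
    ∑ i, w i • x i - a = ∑ i, w i • (x i - a) := by
  simp only [smul_sub, Finset.sum_sub_distrib, ← Finset.sum_smul, hw, one_smul]

section WeightedInner

variable {𝕜 E ι : Type*} [RCLike 𝕜] [NormedAddCommGroup E] [InnerProductSpace 𝕜 E] [Fintype ι]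
  {p : ι → ℝ}

theorem sum_mul_inner_sub_inner_sum_smul (hp : ∑ i, p i = 1) (x y : ι → E) :
    ∑ i, (p i : 𝕜) * ⟪x i, y i⟫_𝕜 - ⟪∑ i, (p i : 𝕜) • x i, ∑ i, (p i : 𝕜) • y i⟫_𝕜 =
      ∑ i, (p i : 𝕜) * ⟪x i - ∑ j, (p j : 𝕜) • x j, y i - ∑ j, (p j : 𝕜) • y j⟫_𝕜 := by
  set X := ∑ j, (p j : 𝕜) • x j
  set Y := ∑ j, (p j : 𝕜) • y j
  have hp𝕜 : ∑ i, (p i : 𝕜) = 1 := by exact_mod_cast hp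
  have hXy : ∑ i, (p i : 𝕜) * ⟪X, y i⟫_𝕜 = ⟪X, Y⟫_𝕜 := by
    simp only [Y, inner_sum, inner_smul_right]
  have hxY : ∑ i, (p i : 𝕜) * ⟪x i, Y⟫_𝕜 = ⟪X, Y⟫_𝕜 := by
    simp only [X, sum_inner, inner_smul_left, RCLike.conj_ofReal]
  simp only [inner_sub_left, inner_sub_right, mul_sub, Finset.sum_sub_distrib, hXy, hxY,
    ← Finset.sum_mul, hp𝕜, one_mul]
  ring

theorem sum_mul_norm_sub_sum_smul_sq (hp : ∑ i, p i = 1) (x : ι → E) (a : E) :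
    ∑ i, p i * ‖x i - ∑ j, (p j : 𝕜) • x j‖ ^ 2 =
      ∑ i, p i * ‖x i - a‖ ^ 2 - ‖∑ j, (p j : 𝕜) • x j - a‖ ^ 2 := by
  have hp𝕜 : ∑ i, (p i : 𝕜) = 1 := by exact_mod_cast hp
  -- the covariance identity for the translated family `xᵢ - a`, whose mean is `X - a`
  have key := sum_mul_inner_sub_inner_sum_smul (𝕜 := 𝕜) hp (x · - a) (x · - a)
  simp only [← sum_smul_sub_of_sum_eq_one hp𝕜, sub_sub_sub_cancel_right,
    inner_self_eq_norm_sq_to_K] at key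
  exact_mod_cast key.symm

theorem sum_mul_norm_sub_sum_smul_sq_le (hp₀ : ∀ i, 0 ≤ p i) (hp : ∑ i, p i = 1)
    {x : ι → E} {a : E} {r : ℝ} (hx : ∀ i, ‖x i - a‖ ≤ r) :
    ∑ i, p i * ‖x i - ∑ j, (p j : 𝕜) • x j‖ ^ 2 ≤ r ^ 2 :=
  calc ∑ i, p i * ‖x i - ∑ j, (p j : 𝕜) • x j‖ ^ 2
      ≤ ∑ i, p i * ‖x i - a‖ ^ 2 := by
        rw [sum_mul_norm_sub_sum_smul_sq hp x a]
        exact sub_le_self _ (sq_nonneg _)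
    _ ≤ ∑ i, p i * r ^ 2 := by
        gcongr with i
        · exact hp₀ i
        · exact hx i
    _ = r ^ 2 := by rw [← Finset.sum_mul, hp, one_mul]

theorem norm_sum_mul_inner_sq_le (hp₀ : ∀ i, 0 ≤ p i) (u v : ι → E) :
    ‖∑ i, (p i : 𝕜) * ⟪u i, v i⟫_𝕜‖ ^ 2 ≤ (∑ i, p i * ‖u i‖ ^ 2) * ∑ i, p i * ‖v i‖ ^ 2 := by
  have htri : ‖∑ i, (p i : 𝕜) * ⟪u i, v i⟫_𝕜‖ ≤ ∑ i, p i * (‖u i‖ * ‖v i‖) := by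
    refine (norm_sum_le _ _).trans (Finset.sum_le_sum fun i _ => ?_)
    rw [norm_mul, RCLike.norm_ofReal, abs_of_nonneg (hp₀ i)]
    exact mul_le_mul_of_nonneg_left (norm_inner_le_norm _ _) (hp₀ i)
  calc ‖∑ i, (p i : 𝕜) * ⟪u i, v i⟫_𝕜‖ ^ 2 ≤ (∑ i, p i * (‖u i‖ * ‖v i‖)) ^ 2 :=
        pow_le_pow_left₀ (norm_nonneg _) htri 2
    _ ≤ (∑ i, p i * ‖u i‖ ^ 2) * ∑ i, p i * ‖v i‖ ^ 2 :=
      Finset.sum_sq_le_sum_mul_sum_of_sq_le_mul _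
        (fun i _ => mul_nonneg (hp₀ i) (sq_nonneg _))
        (fun i _ => mul_nonneg (hp₀ i) (sq_nonneg _)) fun i _ => le_of_eq (by ring)

theorem norm_sum_mul_inner_sub_inner_sum_smul_le (hp₀ : ∀ i, 0 ≤ p i) (hp : ∑ i, p i = 1)
    {x y : ι → E} {a b : E} {r s : ℝ} (hr : 0 ≤ r) (hs : 0 ≤ s)
    (hx : ∀ i, ‖x i - a‖ ≤ r) (hy : ∀ i, ‖y i - b‖ ≤ s) :
    ‖∑ i, (p i : 𝕜) * ⟪x i, y i⟫_𝕜 - ⟪∑ i, (p i : 𝕜) • x i, ∑ i, (p i : 𝕜) • y i⟫_𝕜‖ ≤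
      r * s := by
  rw [sum_mul_inner_sub_inner_sum_smul hp, ← pow_le_pow_iff_left₀ (norm_nonneg _)
    (mul_nonneg hr hs) two_ne_zero, mul_pow]
  refine (norm_sum_mul_inner_sq_le hp₀ _ _).trans ?_
  exact mul_le_mul (sum_mul_norm_sub_sum_smul_sq_le hp₀ hp hx)
    (sum_mul_norm_sub_sum_smul_sq_le hp₀ hp hy)
    (Finset.sum_nonneg fun i _ => mul_nonneg (hp₀ i) (sq_nonneg _)) (sq_nonneg r)

end WeightedInner

theorem gruss_inequality_general {H : Type*} [NormedAddCommGroup H] [InnerProductSpace ℂ H]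
    (n : ℕ) (x y : Fin n → H) (p : Fin n → ℝ)
    (hp : ∀ i, 0 ≤ p i) (hsum : ∑ i, p i = 1) (a b : H) (r s : ℝ)
    (hr : 0 ≤ r) (hs : 0 ≤ s)
    (hx : ∀ i, ‖x i - a‖ ≤ r) (hy : ∀ i, ‖y i - b‖ ≤ s) :
    ‖∑ i, (p i : ℂ) * ⟪x i, y i⟫_ℂ
        - ⟪∑ i, (p i : ℂ) • x i, ∑ i, (p i : ℂ) • y i⟫_ℂ‖ ≤ r * s :=
  norm_sum_mul_inner_sub_inner_sum_smul_le hp hsum hr hs hx hy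

theorem gruss_inequality {H : Type*} [NormedAddCommGroup H] [InnerProductSpace ℂ H]
    (n : ℕ) (hn : 1 ≤ n) (x y : Fin n → H) (p : Fin n → ℝ)
    (hp : ∀ i, 0 ≤ p i) (hsum : ∑ i, p i = 1) (a b : H) (r s : ℝ)
    (hr : 0 ≤ r) (hs : 0 ≤ s)
    (hx : ∀ i, ‖x i - a‖ ≤ r) (hy : ∀ i, ‖y i - b‖ ≤ s) :
    ‖∑ i, (p i : ℂ) * ⟪x i, y i⟫_ℂ
        - ⟪∑ i, (p i : ℂ) • x i, ∑ i, (p i : ℂ) • y i⟫_ℂ‖ ≤ r * s :=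
  gruss_inequality_general n x y p hp hsum a b r s hr hs hx hy
end

section
/- Let H be an inner product space over ℂ, n ≥ 1, x₁,…,xₙ ∈ H, a ∈ H, r ≥ 0 with ‖xₖ − a‖ ≤ r for all k. Then ‖∑ₖ k²·xₖ − ((n+1)(2n+1)/6)·∑ₖ xₖ‖ ≤ (rn/(6√5))·√((n−1)(n+1)(2n+1)(8n+11)). -/
/-!
With `c = (n+1)(2n+1)/6` the mean of `1², …, n²`, the coefficients `k² - c` sum to zero, so the
vector equals `∑ₖ (k² - c) • (xₖ - a)`. The triangle inequality bounds its norm by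
`r ∑ₖ |k² - c|`, and Cauchy–Schwarz by `r √(n ∑ₖ (k² - c)²)`; the closed forms of `∑ k²`
and `∑ k⁴` give `∑ₖ (k² - c)² = n(n-1)(n+1)(2n+1)(8n+11)/180`.
-/

open Finset

theorem sum_smul_eq_sum_smul_sub_of_sum_eq_zero {ι R M : Type*} [Ring R]
    [AddCommGroup M] [Module R M] (s : Finset ι) (β : ι → R) (x : ι → M) (a : M)
    (hβ : ∑ i ∈ s, β i = 0) :
    ∑ i ∈ s, β i • x i = ∑ i ∈ s, β i • (x i - a) := by
  simp only [smul_sub, sum_sub_distrib, ← sum_smul, hβ, zero_smul, sub_zero]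

theorem norm_sum_smul_le_of_sum_eq_zero {ι E : Type*} [NormedAddCommGroup E] [NormedSpace ℝ E]
    (s : Finset ι) (β : ι → ℝ) (x : ι → E) (a : E) {r : ℝ} (hr : 0 ≤ r)
    (hβ : ∑ i ∈ s, β i = 0) (hx : ∀ i ∈ s, ‖x i - a‖ ≤ r) :
    ‖∑ i ∈ s, β i • x i‖ ≤ r * √(#s * ∑ i ∈ s, β i ^ 2) := by
  have cauchy_schwarz : ∑ i ∈ s, |β i| ≤ √(#s * ∑ i ∈ s, β i ^ 2) := by
    simpa only [sq_abs] using
      Real.le_sqrt_of_sq_le (sq_sum_le_card_mul_sum_sq (s := s) (f := (|β ·|)))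
  calc ‖∑ i ∈ s, β i • x i‖
      = ‖∑ i ∈ s, β i • (x i - a)‖ := by
        rw [sum_smul_eq_sum_smul_sub_of_sum_eq_zero s β x a hβ]
    _ ≤ ∑ i ∈ s, |β i| * r := by
        refine (norm_sum_le _ _).trans (sum_le_sum fun i hi => ?_)
        rw [norm_smul, Real.norm_eq_abs]
        exact mul_le_mul_of_nonneg_left (hx i hi) (abs_nonneg _)
    _ = r * ∑ i ∈ s, |β i| := by rw [← sum_mul, mul_comm]
    _ ≤ r * √(#s * ∑ i ∈ s, β i ^ 2) := mul_le_mul_of_nonneg_left cauchy_schwarz hr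

theorem sum_Icc_sq {K : Type*} [Field K] [CharZero K] (n : ℕ) :
    ∑ k ∈ Icc 1 n, (k : K) ^ 2 = n * (n + 1) * (2 * n + 1) / 6 := by
  induction n with
  | zero => simp
  | succ m ih =>
    rw [sum_Icc_succ_top (by omega), ih]
    push_cast
    ring

theorem sum_Icc_pow_four {K : Type*} [Field K] [CharZero K] (n : ℕ) :
    ∑ k ∈ Icc 1 n, (k : K) ^ 4 = n * (n + 1) * (2 * n + 1) * (3 * n ^ 2 + 3 * n - 1) / 30 := by
  induction n with
  | zero => simp
  | succ m ih =>
    rw [sum_Icc_succ_top (by omega), ih]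
    push_cast
    ring

theorem sum_Icc_sq_sub_mean {K : Type*} [Field K] [CharZero K] (n : ℕ) :
    ∑ k ∈ Icc 1 n, ((k : K) ^ 2 - (n + 1) * (2 * n + 1) / 6) = 0 := by
  rw [sum_sub_distrib, sum_Icc_sq, sum_const, Nat.card_Icc, Nat.add_sub_cancel, nsmul_eq_mul]
  ring

theorem sum_Icc_sq_sub_mean_sq {K : Type*} [Field K] [CharZero K] (n : ℕ) :
    ∑ k ∈ Icc 1 n, ((k : K) ^ 2 - (n + 1) * (2 * n + 1) / 6) ^ 2
      = (n : K) * (n - 1) * (n + 1) * (2 * n + 1) * (8 * n + 11) / 180 := by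
  have expand : ∀ k : ℕ, ((k : K) ^ 2 - (n + 1) * (2 * n + 1) / 6) ^ 2
      = (k : K) ^ 4 - (n + 1) * (2 * n + 1) / 3 * (k : K) ^ 2
        + ((n + 1) * (2 * n + 1) / 6) ^ 2 := fun k => by ring
  simp only [expand, sum_add_distrib, sum_sub_distrib, ← mul_sum, sum_const, Nat.card_Icc,
    Nat.add_sub_cancel, nsmul_eq_mul, sum_Icc_sq, sum_Icc_pow_four]
  ring

theorem mellin_moment_two_approx_general {H : Type*} [NormedAddCommGroup H] [InnerProductSpace ℂ H]
    (n : ℕ) (x : ℕ → H) (a : H) (r : ℝ) (hr : 0 ≤ r)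
    (hx : ∀ k ∈ Finset.Icc 1 n, ‖x k - a‖ ≤ r) :
    ‖∑ k ∈ Finset.Icc 1 n, ((k : ℂ) ^ 2) • x k
        - ((((n : ℂ) + 1) * (2 * (n : ℂ) + 1) / 6)) • ∑ k ∈ Finset.Icc 1 n, x k‖
      ≤ r * (n : ℝ) / (6 * Real.sqrt 5)
          * Real.sqrt (((n : ℝ) - 1) * ((n : ℝ) + 1) * (2 * (n : ℝ) + 1)
              * (8 * (n : ℝ) + 11)) := by
  set P : ℝ := ((n : ℝ) - 1) * ((n : ℝ) + 1) * (2 * (n : ℝ) + 1) * (8 * (n : ℝ) + 11)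
  have centered : ∑ k ∈ Icc 1 n, ((k : ℂ) ^ 2) • x k
        - (((n : ℂ) + 1) * (2 * (n : ℂ) + 1) / 6) • ∑ k ∈ Icc 1 n, x k
      = ∑ k ∈ Icc 1 n, ((k : ℝ) ^ 2 - ((n : ℝ) + 1) * (2 * n + 1) / 6) • x k := by
    simp only [← Complex.coe_smul, smul_sum, ← sum_sub_distrib, ← sub_smul]
    push_cast
    rfl
  have variance : ((#(Icc 1 n) : ℕ) : ℝ)
        * ∑ k ∈ Icc 1 n, ((k : ℝ) ^ 2 - ((n : ℝ) + 1) * (2 * n + 1) / 6) ^ 2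
      = ((n : ℝ) / (6 * √5)) ^ 2 * P := by
    rw [Nat.card_Icc, Nat.add_sub_cancel, sum_Icc_sq_sub_mean_sq, div_pow, mul_pow,
      Real.sq_sqrt (by norm_num)]
    ring
  rw [centered]
  refine (norm_sum_smul_le_of_sum_eq_zero _ _ x a hr (sum_Icc_sq_sub_mean n) hx).trans_eq ?_
  rw [variance, Real.sqrt_mul (sq_nonneg _), Real.sqrt_sq (by positivity)]
  ring

theorem mellin_moment_two_approx {H : Type*} [NormedAddCommGroup H] [InnerProductSpace ℂ H]
    (n : ℕ) (hn : 1 ≤ n) (x : ℕ → H) (a : H) (r : ℝ) (hr : 0 ≤ r)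
    (hx : ∀ k ∈ Finset.Icc 1 n, ‖x k - a‖ ≤ r) :
    ‖∑ k ∈ Finset.Icc 1 n, ((k : ℂ) ^ 2) • x k
        - ((((n : ℂ) + 1) * (2 * (n : ℂ) + 1) / 6)) • ∑ k ∈ Finset.Icc 1 n, x k‖
      ≤ r * (n : ℝ) / (6 * Real.sqrt 5)
          * Real.sqrt (((n : ℝ) - 1) * ((n : ℝ) + 1) * (2 * (n : ℝ) + 1)
              * (8 * (n : ℝ) + 11)) :=
  mellin_moment_two_approx_general n x a r hr hx
end
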